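/- arXiv:2108.07622 — 7 statements merged into one kernel-verified Lean document; each statement's English description precedes it below -/
import Mathlib

section
/- For every integer M ≥ 1 and reals a1 ≥ 0, a2 > 0, x > 0, the quantities e1 = a3 + a4, e2 = M·a3 + a4, e3 = M·a3² + 2·a3·a4 + a4², where a3 = a1·x/((a2+x)·(a2+x+M·a1)) and a4 = a2/(a2+x), satisfy 0 ≤ e1 ≤ e2 ≤ 1 and 0 ≤ e3 ≤ e2² ≤ 1. -/
/-! `M a3 + a4` collapses to `(M a1 + a2) / (M a1 + a2 + x)`, a fraction in `[0, 1]`; the other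
bounds only compare the expressions termwise using `a3, a4 ≥ 0` and `M ≥ 1`. -/

theorem mul_div_add_div_eq_div (m a b x : ℝ) (hb : b + x ≠ 0)
    (hm : b + x + m * a ≠ 0) :
    m * (a * x / ((b + x) * (b + x + m * a))) + b / (b + x) = (m * a + b) / (m * a + b + x) := by
  have hm' : m * a + b + x ≠ 0 := by rwa [add_comm, ← add_assoc] at hm
  field_simp
  ring

theorem mul_sq_add_two_mul_add_sq_le_sq {m a b : ℝ} (hm : 1 ≤ m) (ha : 0 ≤ a) (hb : 0 ≤ b) :
    m * a ^ 2 + 2 * a * b + b ^ 2 ≤ (m * a + b) ^ 2 := by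
  have hgap : (m * a + b) ^ 2 - (m * a ^ 2 + 2 * a * b + b ^ 2) = (m - 1) * a * (m * a + 2 * b) := by
    ring
  have : 0 ≤ (m - 1) * a * (m * a + 2 * b) := by
    have : 0 ≤ m - 1 := sub_nonneg.2 hm
    positivity
  linarith

/-- Lemma 2 of the paper: the LMMSE coefficients
`e1 = a3 + a4`, `e2 = M a3 + a4`, `e3 = M a3² + 2 a3 a4 + a4²` built from
`a3 = a1 x /((a2+x)(a2+x+M a1))` and `a4 = a2/(a2+x)` satisfy
`0 ≤ e1 ≤ e2 ≤ 1` and `0 ≤ e3 ≤ e2² ≤ 1`. -/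
theorem stmt2 (M : ℕ) (hM : 1 ≤ M) (a1 a2 x : ℝ)
    (ha1 : 0 ≤ a1) (ha2 : 0 < a2) (hx : 0 < x)
    (a3 a4 e1 e2 e3 : ℝ)
    (ha3 : a3 = a1 * x / ((a2 + x) * (a2 + x + M * a1)))
    (ha4 : a4 = a2 / (a2 + x))
    (he1 : e1 = a3 + a4)
    (he2 : e2 = M * a3 + a4)
    (he3 : e3 = M * a3 ^ 2 + 2 * a3 * a4 + a4 ^ 2) :
    (0 ≤ e1 ∧ e1 ≤ e2 ∧ e2 ≤ 1) ∧ (0 ≤ e3 ∧ e3 ≤ e2 ^ 2 ∧ e2 ^ 2 ≤ 1) := by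
  have hM1 : (1 : ℝ) ≤ M := by exact_mod_cast hM
  have ha3_nonneg : 0 ≤ a3 := by rw [ha3]; positivity
  have ha4_nonneg : 0 ≤ a4 := by rw [ha4]; positivity
  have he2_eq : e2 = (M * a1 + a2) / (M * a1 + a2 + x) := by
    rw [he2, ha3, ha4]
    exact mul_div_add_div_eq_div _ _ _ _ (by positivity) (by positivity)
  have he2_nonneg : 0 ≤ e2 := by rw [he2_eq]; positivity
  have he2_le_one : e2 ≤ 1 := by
    rw [he2_eq]
    exact div_le_one_of_le₀ (by linarith) (by positivity)
  have he1_le : e1 ≤ e2 := by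
    rw [he1, he2]
    gcongr
    exact le_mul_of_one_le_left ha3_nonneg hM1
  refine ⟨⟨by rw [he1]; positivity, he1_le, he2_le_one⟩, ⟨by rw [he3]; positivity, ?_,
    pow_le_one₀ he2_nonneg he2_le_one⟩⟩
  rw [he3, he2]
  exact mul_sq_add_two_mul_add_sq_le_sq hM1 ha3_nonneg ha4_nonneg
end

section
/- Fix reals c > 0, δ ≥ 0, ε ≥ 0, γ ≥ 0, x > 0 and an integer M ≥ 1. For N ∈ ℕ set a1(N) = N·c·δ, a2(N) = N·c·(ε+1) + γ, and NMSE(N) = x·(M·a1(N)·a2(N) + a2(N)² + (a1(N)+a2(N))·x) / ((a2(N)+x)·(a2(N)+x+M·a1(N))·(a1(N)+a2(N))). Then NMSE(N) → 0 as N → ∞. -/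
/-!
The NMSE factors as `x / (a1 + a2)` times a ratio `Q` whose denominator exceeds its numerator by
`x (a2 + x + (M - 1) a1) ≥ 0`, so `0 ≤ NMSE ≤ x / (a1 + a2)`; since `a1 + a2` grows linearly in
`N`, the squeeze theorem gives `NMSE → 0`.
-/

open Filter

noncomputable def lmmseNMSE (M : ℕ) (a1 a2 x : ℝ) : ℝ :=
  x * (M * a1 * a2 + a2 ^ 2 + (a1 + a2) * x) / ((a2 + x) * (a2 + x + M * a1) * (a1 + a2))

theorem lmmseNMSE_eq_div_mul (M : ℕ) (a1 a2 x : ℝ) :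
    lmmseNMSE M a1 a2 x = x / (a1 + a2) *
      ((M * a1 * a2 + a2 ^ 2 + (a1 + a2) * x) / ((a2 + x) * (a2 + x + M * a1))) := by
  rw [lmmseNMSE, div_mul_div_comm]
  ring

section

variable {M : ℕ} {a1 a2 x : ℝ}

theorem lmmseNMSE_nonneg (ha1 : 0 ≤ a1) (ha2 : 0 ≤ a2) (hx : 0 ≤ x) :
    0 ≤ lmmseNMSE M a1 a2 x := by
  unfold lmmseNMSE
  positivity

theorem lmmseNMSE_numerator_le (hM : 1 ≤ M) (ha1 : 0 ≤ a1) (ha2 : 0 ≤ a2) (hx : 0 ≤ x) :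
    M * a1 * a2 + a2 ^ 2 + (a1 + a2) * x ≤ (a2 + x) * (a2 + x + M * a1) := by
  have hM' : (0 : ℝ) ≤ M - 1 := by
    rw [sub_nonneg]
    exact_mod_cast hM
  have hgap : (a2 + x) * (a2 + x + M * a1) - (M * a1 * a2 + a2 ^ 2 + (a1 + a2) * x)
      = x * (a2 + x + (M - 1) * a1) := by ring
  have : 0 ≤ x * (a2 + x + (M - 1) * a1) := by positivity
  linarith

theorem lmmseNMSE_le_div (hM : 1 ≤ M) (ha1 : 0 ≤ a1) (ha2 : 0 < a2) (hx : 0 ≤ x) :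
    lmmseNMSE M a1 a2 x ≤ x / (a1 + a2) := by
  rw [lmmseNMSE_eq_div_mul]
  refine mul_le_of_le_one_right (by positivity) (div_le_one_of_le₀ ?_ (by positivity))
  exact lmmseNMSE_numerator_le hM ha1 ha2.le hx

end

theorem stmt6_general (M : ℕ) (hM : 1 ≤ M) (c δ ε γ x : ℝ)
    (hc : 0 < c) (hδ : 0 ≤ δ) (hε : 0 ≤ ε) (hx : 0 < x)
    (a1 a2 NMSE : ℕ → ℝ)
    (ha1 : ∀ N, a1 N = N * c * δ)
    (ha2 : ∀ N, a2 N = N * c * (ε + 1) + γ)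
    (hNMSE : ∀ N, NMSE N = x * (M * a1 N * a2 N + a2 N ^ 2 + (a1 N + a2 N) * x) /
        ((a2 N + x) * (a2 N + x + M * a1 N) * (a1 N + a2 N))) :
    Tendsto NMSE atTop (nhds 0) := by
  have hNMSE' : NMSE = fun N ↦ lmmseNMSE M (a1 N) (a2 N) x := funext hNMSE
  have ha1_nonneg : ∀ N, 0 ≤ a1 N := fun N ↦ by rw [ha1]; positivity
  have ha2_top : Tendsto a2 atTop atTop := by
    rw [show a2 = fun N : ℕ ↦ c * (ε + 1) * N + γ from funext fun N ↦ by rw [ha2]; ring]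
    exact tendsto_atTop_add_const_right _ γ
      (tendsto_natCast_atTop_atTop.const_mul_atTop (by positivity))
  have hsum_top : Tendsto (fun N ↦ a1 N + a2 N) atTop atTop :=
    (ha2_top.atTop_add_nonneg ha1_nonneg).congr fun N ↦ add_comm _ _
  have ha2_pos : ∀ᶠ N in atTop, 0 < a2 N := ha2_top.eventually_gt_atTop 0
  rw [hNMSE']
  refine tendsto_of_tendsto_of_tendsto_of_le_of_le' tendsto_const_nhds
    ((tendsto_const_nhds (x := x)).div_atTop hsum_top) ?_ ?_
  · filter_upwards [ha2_pos] with N hN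
    exact lmmseNMSE_nonneg (ha1_nonneg N) hN.le hx.le
  · filter_upwards [ha2_pos] with N hN
    exact lmmseNMSE_le_div hM (ha1_nonneg N) hN hx.le

/-- Corollary 1 of the paper: with `a1(N) = N c δ` and
`a2(N) = N c (ε+1) + γ`, the NMSE of the LMMSE channel estimate tends to `0`
as the number of RIS elements `N → ∞`. -/
theorem stmt6 (M : ℕ) (hM : 1 ≤ M) (c δ ε γ x : ℝ)
    (hc : 0 < c) (hδ : 0 ≤ δ) (hε : 0 ≤ ε) (hγ : 0 ≤ γ) (hx : 0 < x)
    (a1 a2 NMSE : ℕ → ℝ)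
    (ha1 : ∀ N, a1 N = N * c * δ)
    (ha2 : ∀ N, a2 N = N * c * (ε + 1) + γ)
    (hNMSE : ∀ N, NMSE N = x * (M * a1 N * a2 N + a2 N ^ 2 + (a1 N + a2 N) * x) /
        ((a2 N + x) * (a2 N + x + M * a1 N) * (a1 N + a2 N))) :
    Tendsto NMSE atTop (nhds 0) :=
  stmt6_general M hM c δ ε γ x hc hδ hε hx a1 a2 NMSE ha1 ha2 hNMSE
end

section
/- Fix reals c > 0, δ ≥ 0, ε ≥ 0, γ ≥ 0, s > 0 and an integer M ≥ 1. For N ∈ ℕ set x(N) = s·N, a1(N) = N·c·δ, a2(N) = N·c·(ε+1) + γ, and NMSE(N) = x(N)·(M·a1(N)·a2(N) + a2(N)² + (a1(N)+a2(N))·x(N)) / ((a2(N)+x(N))·(a2(N)+x(N)+M·a1(N))·(a1(N)+a2(N))). Then NMSE(N) converges as N → ∞ to L = s·(M·c²·δ·(ε+1) + c²·(ε+1)² + c·(δ+ε+1)·s) / ((c·(ε+1)+s)·(c·(ε+1)+s+M·c·δ)·c·(δ+ε+1)), and L < 1. -/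
open Filter Topology

/-!
The NMSE is homogeneous of degree zero in `(a1, a2, x)`. Dividing all three by `N` turns the
`N`-th term into `nmse M (c δ) (c (ε + 1) + γ / N) s`, a continuous function of `γ / N → 0`,
so the limit is read off by evaluating at `γ / N = 0`. That `L < 1` is the general fact that
the NMSE of the LMMSE estimate is below one: the denominator exceeds the numerator by a
polynomial with nonnegative coefficients.
-/

noncomputable def nmse (M a1 a2 x : ℝ) : ℝ :=
  x * (M * a1 * a2 + a2 ^ 2 + (a1 + a2) * x) / ((a2 + x) * (a2 + x + M * a1) * (a1 + a2))

section

variable {M a1 a2 x : ℝ}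

theorem nmse_mul_left {r : ℝ} (hr : r ≠ 0) :
    nmse M (r * a1) (r * a2) (r * x) = nmse M a1 a2 x := by
  unfold nmse
  rw [← mul_div_mul_left (x * _) _ (pow_ne_zero 3 hr)]
  congr 1 <;> ring

theorem nmse_denom_pos (hM : 0 ≤ M) (ha1 : 0 ≤ a1) (ha2 : 0 < a2) (hx : 0 ≤ x) :
    0 < (a2 + x) * (a2 + x + M * a1) * (a1 + a2) := by
  positivity

theorem nmse_lt_one (hM : 0 ≤ M) (ha1 : 0 ≤ a1) (ha2 : 0 < a2) (hx : 0 ≤ x) :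
    nmse M a1 a2 x < 1 := by
  unfold nmse
  rw [div_lt_one (nmse_denom_pos hM ha1 ha2 hx)]
  have hgap : (a2 + x) * (a2 + x + M * a1) * (a1 + a2)
      - x * (M * a1 * a2 + a2 ^ 2 + (a1 + a2) * x)
      = a2 ^ 2 * (a1 + a2 + x) + 2 * a1 * a2 * x + M * a1 * (a1 * a2 + a2 ^ 2 + a1 * x) := by
    ring
  have hgap_pos : 0 < a2 ^ 2 * (a1 + a2 + x) + 2 * a1 * a2 * x
      + M * a1 * (a1 * a2 + a2 ^ 2 + a1 * x) := by
    positivity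
  linarith

theorem continuousAt_nmse_snd (h : (a2 + x) * (a2 + x + M * a1) * (a1 + a2) ≠ 0) :
    ContinuousAt (fun t => nmse M a1 t x) a2 := by
  unfold nmse
  exact ContinuousAt.div (by fun_prop) (by fun_prop) h

end

theorem stmt7_general (M : ℕ) (c δ ε γ s : ℝ)
    (hc : 0 < c) (hδ : 0 ≤ δ) (hε : 0 ≤ ε) (hs : 0 < s)
    (x a1 a2 NMSE : ℕ → ℝ)
    (hx : ∀ N, x N = s * N)
    (ha1 : ∀ N, a1 N = N * c * δ)
    (ha2 : ∀ N, a2 N = N * c * (ε + 1) + γ)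
    (hNMSE : ∀ N, NMSE N =
        x N * (M * a1 N * a2 N + a2 N ^ 2 + (a1 N + a2 N) * x N) /
          ((a2 N + x N) * (a2 N + x N + M * a1 N) * (a1 N + a2 N)))
    (L : ℝ)
    (hL : L = s * (M * c ^ 2 * δ * (ε + 1) + c ^ 2 * (ε + 1) ^ 2 + c * (δ + ε + 1) * s) /
        ((c * (ε + 1) + s) * (c * (ε + 1) + s + M * c * δ) * (c * (δ + ε + 1)))) :
    Tendsto NMSE atTop (nhds L) ∧ L < 1 := by
  have hM : (0 : ℝ) ≤ M := M.cast_nonneg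
  have hδ' : 0 ≤ c * δ := by positivity
  have hε' : 0 < c * (ε + 1) := by positivity
  have hL' : L = nmse M (c * δ) (c * (ε + 1)) s := by
    rw [hL, nmse]
    congr 1 <;> ring
  have hrescale : ∀ N : ℕ, N ≠ 0 → NMSE N = nmse M (c * δ) (c * (ε + 1) + γ / N) s := by
    intro N hN
    have hN' : (N : ℝ) ≠ 0 := Nat.cast_ne_zero.mpr hN
    rw [← nmse_mul_left hN', hNMSE, ← nmse, hx, ha1, ha2]
    congr 1 <;> field_simp
  have hshift : Tendsto (fun N : ℕ => c * (ε + 1) + γ / N) atTop (𝓝 (c * (ε + 1))) := by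
    simpa using (tendsto_const_div_atTop_nhds_zero_nat γ).const_add (c * (ε + 1))
  refine ⟨?_, hL' ▸ nmse_lt_one hM hδ' hε' hs.le⟩
  rw [hL']
  refine ((continuousAt_nmse_snd ?_).tendsto.comp hshift).congr' ?_
  · exact (nmse_denom_pos hM hδ' hε' hs.le).ne'
  · filter_upwards [eventually_ne_atTop 0] with N hN
    exact (hrescale N hN).symm

/-- Corollary 1, eq. (25), of the paper: scaling the transmit power
as `p = E_u/N`, i.e. `x(N) = s N` with `s = σ²/(τ E_u)`, the NMSE converges as
`N → ∞` to the explicit limit `L`, which is strictly smaller than `1`. -/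
theorem stmt7 (M : ℕ) (hM : 1 ≤ M) (c δ ε γ s : ℝ)
    (hc : 0 < c) (hδ : 0 ≤ δ) (hε : 0 ≤ ε) (hγ : 0 ≤ γ) (hs : 0 < s)
    (x a1 a2 NMSE : ℕ → ℝ)
    (hx : ∀ N, x N = s * N)
    (ha1 : ∀ N, a1 N = N * c * δ)
    (ha2 : ∀ N, a2 N = N * c * (ε + 1) + γ)
    (hNMSE : ∀ N, NMSE N =
        x N * (M * a1 N * a2 N + a2 N ^ 2 + (a1 N + a2 N) * x N) /
          ((a2 N + x N) * (a2 N + x N + M * a1 N) * (a1 N + a2 N)))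
    (L : ℝ)
    (hL : L = s * (M * c ^ 2 * δ * (ε + 1) + c ^ 2 * (ε + 1) ^ 2 + c * (δ + ε + 1) * s) /
        ((c * (ε + 1) + s) * (c * (ε + 1) + s + M * c * δ) * (c * (δ + ε + 1)))) :
    Tendsto NMSE atTop (nhds L) ∧ L < 1 :=
  stmt7_general M c δ ε γ s hc hδ hε hs x a1 a2 NMSE hx ha1 ha2 hNMSE L hL
end

section
/- Let β > 0, α > 0, γ ≥ 0, σ² > 0, τ > 0, E_u > 0 be reals. For N ∈ ℕ set x(N) = σ²·N/(τ·E_u) and NMSE(N) = x(N)/(N·β·α + γ + x(N)). Then NMSE(N) → σ²/(τ·E_u·β·α + σ²) as N → ∞, and this limit is strictly less than 1. -/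
open Filter Topology

/-- Dividing numerator and denominator by `N` leaves `c / (a + b / N + c)`, and `b / N → 0`. -/
theorem tendsto_const_mul_div_linear_add_const (a b c : ℝ) (h : a + c ≠ 0) :
    Tendsto (fun N : ℕ => c * N / (N * a + b + c * N)) atTop (𝓝 (c / (a + c))) := by
  have hlim : Tendsto (fun N : ℕ => c / (a + b / N + c)) atTop (𝓝 (c / (a + 0 + c))) :=
    tendsto_const_nhds.div
      ((tendsto_const_nhds.add (tendsto_const_div_atTop_nhds_zero_nat b)).add tendsto_const_nhds)
      (by simpa using h)
  rw [add_zero] at hlim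
  refine hlim.congr' ?_
  filter_upwards [eventually_ne_atTop 0] with N hN
  have hN' : (N : ℝ) ≠ 0 := Nat.cast_ne_zero.mpr hN
  rw [← div_div_div_cancel_right₀ hN' (c * N)]
  congr 1
  · field_simp
  · field_simp

theorem stmt8_general (β α γ σ2 τ Eu : ℝ)
    (hβ : 0 < β) (hα : 0 < α) (hσ : 0 < σ2) (hτ : 0 < τ) (hEu : 0 < Eu)
    (x NMSE : ℕ → ℝ)
    (hx : ∀ N, x N = σ2 * N / (τ * Eu))
    (hNMSE : ∀ N, NMSE N = x N / (N * β * α + γ + x N)) :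
    Tendsto NMSE atTop (nhds (σ2 / (τ * Eu * β * α + σ2))) ∧
      σ2 / (τ * Eu * β * α + σ2) < 1 := by
  have hgain : 0 < τ * Eu * β * α := by positivity
  have hNMSE_eq :
      NMSE = fun N : ℕ => σ2 / (τ * Eu) * N / (N * (β * α) + γ + σ2 / (τ * Eu) * N) := by
    funext N
    rw [hNMSE, hx, div_mul_eq_mul_div, mul_assoc]
  have hlimit :
      σ2 / (τ * Eu) / (β * α + σ2 / (τ * Eu)) = σ2 / (τ * Eu * β * α + σ2) := by
    field_simp
  refine ⟨?_, (div_lt_one (by positivity)).mpr (by linarith)⟩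
  rw [hNMSE_eq, ← hlimit]
  exact tendsto_const_mul_div_linear_add_const _ _ _ (by positivity)

/-- Corollary 3 of the paper, δ = 0, power scaled as `p = E_u/N`:
with `x(N) = σ² N/(τ E_u)`, the NMSE `x(N)/(N β α + γ + x(N))` converges to
`σ²/(τ E_u β α + σ²)` as `N → ∞`, and this limit is strictly less than `1`. -/
theorem stmt8 (β α γ σ2 τ Eu : ℝ)
    (hβ : 0 < β) (hα : 0 < α) (hγ : 0 ≤ γ) (hσ : 0 < σ2) (hτ : 0 < τ) (hEu : 0 < Eu)
    (x NMSE : ℕ → ℝ)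
    (hx : ∀ N, x N = σ2 * N / (τ * Eu))
    (hNMSE : ∀ N, NMSE N = x N / (N * β * α + γ + x N)) :
    Tendsto NMSE atTop (nhds (σ2 / (τ * Eu * β * α + σ2))) ∧
      σ2 / (τ * Eu * β * α + σ2) < 1 :=
  stmt8_general β α γ σ2 τ Eu hβ hα hσ hτ hEu x NMSE hx hNMSE
end

section
/- With the Corollary-5 closed-form SINR defined in the context (δ = 0, fixed transmit power p > 0, hence fixed x = σ²/(τp)), and assuming each H_i : ℕ → ℝ is nonnegative and bounded, the SINR of user k satisfies SINR_k(N) → M·α_k / (∑_{i=1}^{K} α_i) as the number of RIS elements N → ∞. -/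
open Filter Topology

/-! Divide numerator and denominator of the SINR by `N²`. Every bracket is `a N² + b N + v(N)`
with `v` bounded (this is where the boundedness of `H_i` enters), multiplied by `e1(N) → 1`,
so after division only the leading coefficients survive. Since `c_i (ε_i + 1) = β α_i`, these
are `p M β² α_k²` for the numerator and `p β² α_k ∑ᵢ α_i` for the denominator. -/

lemma Filter.Tendsto.div_of_div_common {ι 𝕜 : Type*} [NormedDivisionRing 𝕜] {l : Filter ι}
    {f g w : ι → 𝕜} {a b : 𝕜} (hw : ∀ᶠ n in l, w n ≠ 0)
    (hf : Tendsto (fun n => f n / w n) l (𝓝 a)) (hg : Tendsto (fun n => g n / w n) l (𝓝 b))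
    (hb : b ≠ 0) : Tendsto (fun n => f n / g n) l (𝓝 (a / b)) :=
  (hf.div hg hb).congr' <| hw.mono fun _ hn => div_div_div_cancel_right₀ hn _ _

lemma tendsto_affine_div_natCast (a b : ℝ) :
    Tendsto (fun N : ℕ => (a * N + b) / N) atTop (𝓝 a) := by
  have h := (tendsto_const_nhds (x := a)).add
    ((tendsto_inv_atTop_nhds_zero_nat (𝕜 := ℝ)).const_mul b)
  rw [mul_zero, add_zero] at h
  refine h.congr' ?_
  filter_upwards [eventually_ne_atTop 0] with N hN
  field_simp

lemma tendsto_quadratic_add_bounded_div_sq (a b : ℝ) {v : ℕ → ℝ}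
    (hv : ∃ C, ∀ N, |v N| ≤ C) :
    Tendsto (fun N : ℕ => (a * N ^ 2 + b * N + v N) / N ^ 2) atTop (𝓝 a) := by
  have hinv := tendsto_inv_atTop_nhds_zero_nat (𝕜 := ℝ)
  have hinv_sq : Tendsto (fun N : ℕ => ((N : ℝ)⁻¹) ^ 2) atTop (𝓝 0) := by
    simpa using hinv.pow 2
  have hbdd : IsBoundedUnder (· ≤ ·) atTop ((‖·‖) ∘ v) :=
    isBoundedUnder_of <| hv.imp fun _ hC N => hC N
  have h := ((tendsto_const_nhds (x := a)).add (hinv.const_mul b)).add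
    (hinv_sq.zero_mul_isBoundedUnder_le hbdd)
  rw [mul_zero, add_zero, add_zero] at h
  refine h.congr' ?_
  filter_upwards [eventually_ne_atTop 0] with N hN
  field_simp

lemma tendsto_quadratic_add_bounded_mul_div_sq (a b : ℝ) {v e : ℕ → ℝ} {t : ℝ}
    (hv : ∃ C, ∀ N, |v N| ≤ C) (he : Tendsto e atTop (𝓝 t)) :
    Tendsto (fun N : ℕ => (a * N ^ 2 + b * N + v N) * e N / N ^ 2) atTop (𝓝 (a * t)) := by
  simpa only [mul_div_right_comm] using (tendsto_quadratic_add_bounded_div_sq a b hv).mul he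

lemma tendsto_affine_div_affine_add (b x : ℝ) {a : ℝ} (ha : a ≠ 0) :
    Tendsto (fun N : ℕ => (N * a + b) / (N * a + b + x)) atTop (𝓝 1) := by
  have h := (tendsto_affine_div_natCast a b).div_of_div_common
    (eventually_ne_atTop 0 |>.mono fun _ hN => Nat.cast_ne_zero.2 hN)
    (tendsto_affine_div_natCast a (b + x)) ha
  rw [div_self ha] at h
  exact h.congr fun N => by ring_nf

lemma sq_add_sum_erase_mul_eq {ι R : Type*} [Fintype ι] [DecidableEq ι] [CommRing R]
    (β : R) (α : ι → R) (k : ι) :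
    (β * α k) ^ 2 + ∑ i ∈ Finset.univ.erase k, β * α k * (β * α i)
      = β ^ 2 * α k * ∑ i, α i := by
  rw [← Finset.mul_sum, ← Finset.mul_sum, ← Finset.add_sum_erase _ α (Finset.mem_univ k)]
  ring

lemma exists_abs_mul_add_le {ι : Type*} {v : ι → ℝ} (h0 : ∀ n, 0 ≤ v n)
    (hC : ∃ C, ∀ n, v n ≤ C) (m d : ℝ) : ∃ C, ∀ n, |m * v n + d| ≤ C := by
  obtain ⟨C, hC⟩ := hC
  refine ⟨|m| * C + |d|, fun n => (abs_add_le _ _).trans ?_⟩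
  rw [abs_mul, abs_of_nonneg (h0 n)]
  gcongr
  exact hC n

theorem stmt9_general (K : ℕ) (M : ℕ)
    (β : ℝ) (hβ : 0 < β)
    (α γ ε : Fin K → ℝ)
    (hα : ∀ i, 0 < α i) (hε : ∀ i, 0 ≤ ε i)
    (c : Fin K → ℝ) (hc : ∀ i, c i = β * α i / (ε i + 1))
    (k : Fin K) (σ2 p : ℝ) (hp : 0 < p)
    (x : ℝ)
    (H : Fin K → ℕ → ℝ)
    (hHnn : ∀ i N, 0 ≤ H i N)
    (hHbd : ∀ i, ∃ C : ℝ, ∀ N, H i N ≤ C)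
    (e1 S E L : ℕ → ℝ) (I : Fin K → ℕ → ℝ) (SINR : ℕ → ℝ)
    (he1 : ∀ N : ℕ, e1 N = (N * β * α k + γ k) / (N * β * α k + γ k + x))
    (hS : ∀ N : ℕ, S N = M * (N * β * α k + γ k) ^ 2 * e1 N)
    (hE : ∀ N : ℕ, E N = N * β * α k + γ k)
    (hL : ∀ N : ℕ, L N =
        ((N : ℝ) ^ 2 * c k ^ 2 * (ε k + 1) ^ 2
          + M * N * c k ^ 2 * (2 * ε k + 1)
          + N * c k * (c k * (2 * ε k + 1) + (2 * γ k + x) * (ε k + 1))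
          + γ k * (γ k + x)) * e1 N)
    (hI : ∀ i, i ≠ k → ∀ N : ℕ, I i N =
        ((N : ℝ) ^ 2 * c k * c i * (ε k + 1) * (ε i + 1)
          + M * N * c k * c i * (ε k + ε i + 1)
          + M * c k * c i * ε k * ε i * H i N
          + N * ((γ k + x) * c i * (ε i + 1) + γ i * c k * (ε k + 1))
          + γ i * (γ k + x)) * e1 N)
    (hSINR : ∀ N : ℕ, SINR N =
        p * S N / (p * L N + p * (∑ i ∈ Finset.univ.erase k, I i N) + σ2 * E N)) :
    Tendsto SINR atTop (nhds (M * α k / ∑ i, α i)) := by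
  have hA : β * α k ≠ 0 := (mul_pos hβ (hα k)).ne'
  have hce : ∀ i, c i * (ε i + 1) = β * α i := fun i => by
    rw [hc i, div_mul_cancel₀ _ (by linarith [hε i])]
  have he1_lim : Tendsto e1 atTop (𝓝 1) :=
    (tendsto_affine_div_affine_add (γ k) x hA).congr fun N => by rw [he1, mul_assoc]
  have bracket : ∀ a b (v : ℕ → ℝ), (∃ C, ∀ N, |v N| ≤ C) →
      Tendsto (fun N : ℕ => (a * N ^ 2 + b * N + v N) * e1 N / N ^ 2) atTop (𝓝 a) :=
    fun a b v hv => by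
      simpa only [mul_one] using tendsto_quadratic_add_bounded_mul_div_sq a b hv he1_lim
  have const_bdd : ∀ d : ℝ, ∃ C, ∀ _ : ℕ, |d| ≤ C := fun d => ⟨|d|, fun _ => le_rfl⟩
  have hnum : Tendsto (fun N : ℕ => p * S N / N ^ 2) atTop (𝓝 (p * M * (β * α k) ^ 2)) :=
    (bracket _ (2 * p * M * (β * α k) * γ k) _ (const_bdd (p * M * γ k ^ 2))).congr
      fun N => by rw [hS]; ring
  have hL_lim : Tendsto (fun N : ℕ => L N / N ^ 2) atTop (𝓝 ((c k * (ε k + 1)) ^ 2)) :=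
    (bracket _ (M * c k ^ 2 * (2 * ε k + 1)
        + c k * (c k * (2 * ε k + 1) + (2 * γ k + x) * (ε k + 1))) _
      (const_bdd (γ k * (γ k + x)))).congr fun N => by rw [hL]; ring
  have hI_lim : ∀ i ∈ Finset.univ.erase k, Tendsto (fun N : ℕ => I i N / N ^ 2) atTop
      (𝓝 (c k * (ε k + 1) * (c i * (ε i + 1)))) := by
    intro i hi
    have hv := exists_abs_mul_add_le (hHnn i) (hHbd i) (M * c k * c i * ε k * ε i)
      (γ i * (γ k + x))
    exact (bracket _ (M * c k * c i * (ε k + ε i + 1)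
        + ((γ k + x) * c i * (ε i + 1) + γ i * c k * (ε k + 1))) _ hv).congr
      fun N => by rw [hI i (Finset.ne_of_mem_erase hi)]; ring
  have hE_lim : Tendsto (fun N : ℕ => E N / N ^ 2) atTop (𝓝 0) :=
    (tendsto_quadratic_add_bounded_div_sq 0 (β * α k) (const_bdd (γ k))).congr
      fun N => by rw [hE]; ring
  have hden : Tendsto
      (fun N : ℕ => (p * L N + p * (∑ i ∈ Finset.univ.erase k, I i N) + σ2 * E N) / N ^ 2)
      atTop (𝓝 (p * (β ^ 2 * α k * ∑ i, α i))) := by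
    have h := ((hL_lim.const_mul p).add ((tendsto_finsetSum _ hI_lim).const_mul p)).add
      (hE_lim.const_mul σ2)
    simp only [hce, mul_zero, add_zero, ← mul_add, sq_add_sum_erase_mul_eq] at h
    exact h.congr fun N => by rw [← Finset.sum_div]; ring
  have hsum : 0 < ∑ i, α i := Finset.sum_pos (fun i _ => hα i) ⟨k, Finset.mem_univ k⟩
  have h := hnum.div_of_div_common
    (eventually_ne_atTop 0 |>.mono fun _ hN => pow_ne_zero 2 (Nat.cast_ne_zero.2 hN)) hden
    (by have := hα k; positivity)
  rw [show p * M * (β * α k) ^ 2 / (p * (β ^ 2 * α k * ∑ i, α i)) = M * α k / ∑ i, α i by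
    field_simp] at h
  exact h.congr fun N => (hSINR N).symm

/-- limit (43) of the paper, from Corollary 5 with δ = 0 and fixed
transmit power: the closed-form SINR of user `k` satisfies
`SINR_k(N) → M α_k / ∑ᵢ α_i` as the number of RIS elements `N → ∞`. -/
theorem stmt9 (K : ℕ) (hK : 1 ≤ K) (M : ℕ) (hM : 1 ≤ M)
    (β : ℝ) (hβ : 0 < β)
    (α γ ε : Fin K → ℝ)
    (hα : ∀ i, 0 < α i) (hγ : ∀ i, 0 ≤ γ i) (hε : ∀ i, 0 ≤ ε i)
    (c : Fin K → ℝ) (hc : ∀ i, c i = β * α i / (ε i + 1))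
    (k : Fin K) (σ2 τ p : ℝ) (hσ : 0 < σ2) (hτ : 0 < τ) (hp : 0 < p)
    (x : ℝ) (hx : x = σ2 / (τ * p))
    (H : Fin K → ℕ → ℝ)
    (hHnn : ∀ i N, 0 ≤ H i N)
    (hHbd : ∀ i, ∃ C : ℝ, ∀ N, H i N ≤ C)
    (e1 S E L : ℕ → ℝ) (I : Fin K → ℕ → ℝ) (SINR : ℕ → ℝ)
    (he1 : ∀ N : ℕ, e1 N = (N * β * α k + γ k) / (N * β * α k + γ k + x))
    (hS : ∀ N : ℕ, S N = M * (N * β * α k + γ k) ^ 2 * e1 N)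
    (hE : ∀ N : ℕ, E N = N * β * α k + γ k)
    (hL : ∀ N : ℕ, L N =
        ((N : ℝ) ^ 2 * c k ^ 2 * (ε k + 1) ^ 2
          + M * N * c k ^ 2 * (2 * ε k + 1)
          + N * c k * (c k * (2 * ε k + 1) + (2 * γ k + x) * (ε k + 1))
          + γ k * (γ k + x)) * e1 N)
    (hI : ∀ i, i ≠ k → ∀ N : ℕ, I i N =
        ((N : ℝ) ^ 2 * c k * c i * (ε k + 1) * (ε i + 1)
          + M * N * c k * c i * (ε k + ε i + 1)
          + M * c k * c i * ε k * ε i * H i N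
          + N * ((γ k + x) * c i * (ε i + 1) + γ i * c k * (ε k + 1))
          + γ i * (γ k + x)) * e1 N)
    (hSINR : ∀ N : ℕ, SINR N =
        p * S N / (p * L N + p * (∑ i ∈ Finset.univ.erase k, I i N) + σ2 * E N)) :
    Tendsto SINR atTop (nhds (M * α k / ∑ i, α i)) :=
  stmt9_general K M β hβ α γ ε hα hε c hc k σ2 p hp x H hHnn hHbd e1 S E L I SINR he1 hS hE hL hI
    hSINR
end

section
/- Let s1, s2, t1, t2 > 0 and B ≥ 0 be reals, and let f(x) = (s1·x+s2)²/(t1·x+t2). Then for every x ∈ [0,B], f(x) ≤ max(f(0), f(B)); i.e. the maximum of f over the interval [0,B] is always attained at one of the two endpoints. -/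
/-!
The map `(p, u) ↦ p ^ 2 / u` is jointly convex on `u > 0` (it is the perspective of `p ↦ p ^ 2`;
the Jensen gap `α (p²/u) + β (q²/v) - (αp + βq)²/(αu + βv)` equals `αβ (pv - qu)² / (uv (αu + βv))`).
The SNR `f` is its composition with the affine map `x ↦ (s1 x + s2, t1 x + t2)`, hence convex on
`[0, ∞)`, and a convex function on an interval is maximised at an endpoint.
-/

open Set

theorem convexOn_sq_div : ConvexOn ℝ (univ ×ˢ Ioi 0) fun z : ℝ × ℝ => z.1 ^ 2 / z.2 := by
  refine ⟨convex_univ.prod (convex_Ioi 0), ?_⟩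
  rintro ⟨p, u⟩ ⟨-, hu : 0 < u⟩ ⟨q, v⟩ ⟨-, hv : 0 < v⟩ α β hα hβ hαβ
  have hw : 0 < α * u + β * v := by
    rcases hα.eq_or_lt with rfl | hα
    · simp_all
    · positivity
  simp only [Prod.smul_mk, Prod.mk_add_mk, smul_eq_mul]
  rw [div_le_iff₀ hw]
  field_simp
  nlinarith [mul_nonneg (mul_nonneg hα hβ) (sq_nonneg (p * v - q * u))]

theorem convexOn_sq_div_affine (a b c d : ℝ) :
    ConvexOn ℝ {x | 0 < c * x + d} fun x => (a * x + b) ^ 2 / (c * x + d) := by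
  let g : ℝ →ᵃ[ℝ] ℝ × ℝ := AffineMap.lineMap (b, d) (a + b, c + d)
  have hg (x : ℝ) : g x = (a * x + b, c * x + d) := by
    ext <;> simp [g, AffineMap.lineMap_apply] <;> ring
  have hpre : g ⁻¹' (univ ×ˢ Ioi 0) = {x | 0 < c * x + d} := by
    ext x; simp [hg]
  rw [← hpre]
  simpa [Function.comp_def, hg] using convexOn_sq_div.comp_affineMap g

theorem stmt13_general (s1 s2 t1 t2 B : ℝ)
    (ht1 : 0 < t1) (ht2 : 0 < t2)
    (f : ℝ → ℝ) (hf : ∀ x, f x = (s1 * x + s2) ^ 2 / (t1 * x + t2)) :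
    ∀ x ∈ Set.Icc (0 : ℝ) B, f x ≤ max (f 0) (f B) := by
  intro x hx
  have hB : 0 ≤ B := hx.1.trans hx.2
  have hf_convex : ConvexOn ℝ {x | 0 < t1 * x + t2} f := by
    simpa only [← hf] using convexOn_sq_div_affine s1 s2 t1 t2
  exact hf_convex.le_max_of_mem_Icc (by simpa using ht2)
    (show 0 < t1 * B + t2 by positivity) hx

/-- Theorem 3, Case 3, of the paper: the SNR function
`f(x) = (s1 x + s2)²/(t1 x + t2)` attains its maximum over any interval `[0,B]`
at one of the two endpoints: `f(x) ≤ max (f 0) (f B)` for all `x ∈ [0,B]`. -/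
theorem stmt13 (s1 s2 t1 t2 B : ℝ)
    (hs1 : 0 < s1) (hs2 : 0 < s2) (ht1 : 0 < t1) (ht2 : 0 < t2) (hB : 0 ≤ B)
    (f : ℝ → ℝ) (hf : ∀ x, f x = (s1 * x + s2) ^ 2 / (t1 * x + t2)) :
    ∀ x ∈ Set.Icc (0 : ℝ) B, f x ≤ max (f 0) (f B) :=
  stmt13_general s1 s2 t1 t2 B ht1 ht2 f hf
end

section
/- Let N ≥ 1, let A, B be N×N complex matrices, θ : Fin N → ℝ, n ∈ Fin N, and c : Fin N → ℂ defined by c_k = exp(i·θ_k). Define g : ℝ → ℂ by g(t) = trace(A · diagonal(c_t) · B · diagonal(star c_t)), where c_t is c with its n-th entry replaced by exp(i·t). Then g is differentiable at t = θ_n with derivative g′(θ_n) = −i·exp(−i·θ_n)·((A ⊙ Bᵀ) *ᵥ c)_n + i·((star c) ᵥ* (A ⊙ Bᵀ))_n·exp(i·θ_n), where ⊙ denotes the Hadamard (entrywise) matrix product. -/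
/-! Since `Tr (A diag(u) B diag(v)) = (v ᵥ* (A ⊙ Bᵀ)) ⬝ᵥ u`, the function `g` is a bilinear
expression in the phase vector `u(t)` and its conjugate. Only the `n`-th coordinate of `u(t)`
moves, with velocity `i e^{iθₙ}` (and `-i e^{-iθₙ}` for the conjugate), so the product rule gives
the formula. -/

open Matrix

section
variable {𝕜 𝔸 ι : Type*} [NontriviallyNormedField 𝕜] [NormedCommRing 𝔸] [NormedAlgebra 𝕜 𝔸]
  [Fintype ι] {x : 𝕜}

theorem HasDerivAt.dotProduct {u v : 𝕜 → ι → 𝔸} {u' v' : ι → 𝔸} (hu : HasDerivAt u u' x)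
    (hv : HasDerivAt v v' x) :
    HasDerivAt (fun t => u t ⬝ᵥ v t) (u' ⬝ᵥ v x + u x ⬝ᵥ v') x := by
  have h := HasDerivAt.fun_sum (u := Finset.univ) fun i _ =>
    (hasDerivAt_pi.1 hu i).fun_mul (hasDerivAt_pi.1 hv i)
  rwa [Finset.sum_add_distrib] at h

theorem HasDerivAt.vecMul {κ : Type*} {v : 𝕜 → ι → 𝔸} {v' : ι → 𝔸} (hv : HasDerivAt v v' x)
    (M : Matrix ι κ 𝔸) : HasDerivAt (fun t => v t ᵥ* M) (v' ᵥ* M) x :=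
  hasDerivAt_pi.2 fun j => by
    simpa only [Matrix.vecMul, dotProduct_zero, add_zero] using
      hv.dotProduct (hasDerivAt_const x fun i => M i j)

end

theorem HasDerivAt.update {𝕜 ι E : Type*} [NontriviallyNormedField 𝕜] [Fintype ι] [DecidableEq ι]
    [NormedAddCommGroup E] [NormedSpace 𝕜 E] (c : ι → E) (i : ι) {f : 𝕜 → E} {f' : E} {x : 𝕜}
    (hf : HasDerivAt f f' x) :
    HasDerivAt (fun t => Function.update c i (f t)) (Pi.single i f') x :=
  hasDerivAt_pi.2 fun j => by
    rcases eq_or_ne j i with rfl | hj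
    · simpa using hf
    · simpa [hj] using hasDerivAt_const x (c j)

theorem Matrix.trace_mul_diagonal_mul_diagonal {ι R : Type*} [Fintype ι] [DecidableEq ι]
    [CommSemiring R] (A B : Matrix ι ι R) (u v : ι → R) :
    trace (A * diagonal u * B * diagonal v) = v ᵥ* (A ⊙ Bᵀ) ⬝ᵥ u := by
  rw [dotProduct_vecMul_hadamard, transpose_mul, transpose_transpose, diagonal_transpose,
    ← Matrix.mul_assoc, trace_mul_comm, Matrix.mul_assoc, Matrix.mul_assoc, Matrix.mul_assoc]

theorem Complex.star_exp_I_mul_ofReal (t : ℝ) :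
    star (Complex.exp (Complex.I * t)) = Complex.exp (-Complex.I * t) := by
  rw [Complex.star_def, ← Complex.exp_conj]
  simp

theorem Complex.hasDerivAt_exp_I_mul_ofReal (t : ℝ) :
    HasDerivAt (fun s : ℝ => Complex.exp (Complex.I * s))
      (Complex.I * Complex.exp (Complex.I * t)) t := by
  simpa [mul_comm] using ((hasDerivAt_id t).ofReal_comp.const_mul Complex.I).cexp

theorem stmt15_general (N : ℕ)
    (A B : Matrix (Fin N) (Fin N) ℂ)
    (θ : Fin N → ℝ) (n : Fin N)
    (c : Fin N → ℂ) (hc : ∀ k, c k = Complex.exp (Complex.I * (θ k : ℂ)))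
    (g : ℝ → ℂ)
    (hg : ∀ t : ℝ, g t =
        Matrix.trace (A * Matrix.diagonal (Function.update c n (Complex.exp (Complex.I * (t : ℂ))))
          * B * Matrix.diagonal (star (Function.update c n (Complex.exp (Complex.I * (t : ℂ))))))) :
    HasDerivAt g
      (-Complex.I * Complex.exp (-Complex.I * (θ n : ℂ)) * (Matrix.hadamard A Bᵀ *ᵥ c) n
        + Complex.I * (star c ᵥ* Matrix.hadamard A Bᵀ) n * Complex.exp (Complex.I * (θ n : ℂ)))
      (θ n) := by
  set u : ℝ → Fin N → ℂ := fun t => Function.update c n (Complex.exp (Complex.I * t))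
  have hu : HasDerivAt u (Pi.single n (Complex.I * Complex.exp (Complex.I * θ n))) (θ n) :=
    HasDerivAt.update c n (Complex.hasDerivAt_exp_I_mul_ofReal (θ n))
  have hu_θ : u (θ n) = c := by simp [u, ← hc n]
  have hg_u : g = fun t => star (u t) ᵥ* (A ⊙ Bᵀ) ⬝ᵥ u t :=
    funext fun t => (hg t).trans (trace_mul_diagonal_mul_diagonal A B _ _)
  rw [hg_u]
  refine ((hu.star.vecMul (A ⊙ Bᵀ)).dotProduct hu).congr_deriv ?_
  rw [hu_θ, ← dotProduct_mulVec, Pi.star_single, single_dotProduct, dotProduct_single,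
    star_mul', Complex.star_exp_I_mul_ofReal, Complex.star_def, Complex.conj_I]
  ring

/-- Lemma 10 / Appendix I of the paper: the partial derivative of
`Tr(A Φ B Φᴴ)` with respect to the `n`-th RIS phase `θₙ`, where `Φ = diagonal c`
with `c = exp(i θ)`, equals
`-i e^{-i θₙ} ((A ⊙ Bᵀ) c)ₙ + i (cᴴ (A ⊙ Bᵀ))ₙ e^{i θₙ}`. -/
theorem stmt15 (N : ℕ) (hN : 1 ≤ N)
    (A B : Matrix (Fin N) (Fin N) ℂ)
    (θ : Fin N → ℝ) (n : Fin N)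
    (c : Fin N → ℂ) (hc : ∀ k, c k = Complex.exp (Complex.I * (θ k : ℂ)))
    (g : ℝ → ℂ)
    (hg : ∀ t : ℝ, g t =
        Matrix.trace (A * Matrix.diagonal (Function.update c n (Complex.exp (Complex.I * (t : ℂ))))
          * B * Matrix.diagonal (star (Function.update c n (Complex.exp (Complex.I * (t : ℂ))))))) :
    HasDerivAt g
      (-Complex.I * Complex.exp (-Complex.I * (θ n : ℂ)) * (Matrix.hadamard A Bᵀ *ᵥ c) n
        + Complex.I * (star c ᵥ* Matrix.hadamard A Bᵀ) n * Complex.exp (Complex.I * (θ n : ℂ)))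
      (θ n) :=
  stmt15_general N A B θ n c hc g hg
end
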